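/- Let k ∈ ℝ, let w_A, w_B : ℝ → ℂ be C^∞ functions with w_A(x) + w_B(x) = x + k for all x, let s_A, s_B be antiderivatives of w_A, w_B with s_A(x) + s_B(x) = x²/2 + kx, and set φ₀(x) = N_φ e^{−s_A(x)}, Ψ₀(x) = N_Ψ e^{−conj(s_B(x))}. Define φ_n = (1/√(n!)) Bⁿ φ₀ and Ψ_n = (1/√(n!)) (A†)ⁿ Ψ₀, where (Bf)(x) = −f'(x) + w_B(x) f(x) and (A†f)(x) = −f'(x) + conj(w_A(x)) f(x). Then for every n ≥ 0 and every x ∈ ℝ one has φ_n(x) = p_n(x,k)·φ₀(x) and Ψ_n(x) = p_n(x,k)·Ψ₀(x), where the polynomials p_n(·,k) are defined recursively by p₀(x,k) = 1 and p_n(x,k) = (1/√n)·((x+k)·p_{n−1}(x,k) − ∂_x p_{n−1}(x,k)) for n ≥ 1; in particular the ratio φ_n/φ₀ = Ψ_n/Ψ₀ is independent of the choice of the superpotentials w_A, w_B. -/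

import Mathlib

open MeasureTheory

noncomputable section

/-- The pseudo-bosonic raising operator `B = -d/dx + w_B`. -/
def opB (wB : ℝ → ℂ) (f : ℝ → ℂ) : ℝ → ℂ :=
  fun x => -deriv f x + wB x * f x

/-- The pseudo-bosonic raising operator `A† = -d/dx + conj w_A`. -/
def opAdag (wA : ℝ → ℂ) (f : ℝ → ℂ) : ℝ → ℂ :=
  fun x => -deriv f x + (starRingEnd ℂ) (wA x) * f x

/-- `φ_n = (1/√n!) Bⁿ φ₀` with `φ₀ = N_φ e^{-s_A}`. -/
def pbPhi (wB sA : ℝ → ℂ) (Nφ : ℂ) (n : ℕ) : ℝ → ℂ :=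
  fun x => (1 / (Real.sqrt n.factorial : ℂ)) *
    ((opB wB)^[n] (fun t => Nφ * Complex.exp (-sA t)) x)

/-- `Ψ_n = (1/√n!) (A†)ⁿ Ψ₀` with `Ψ₀ = N_Ψ e^{-conj s_B}`. -/
def pbPsi (wA sB : ℝ → ℂ) (NΨ : ℂ) (n : ℕ) : ℝ → ℂ :=
  fun x => (1 / (Real.sqrt n.factorial : ℂ)) *
    ((opAdag wA)^[n] (fun t => NΨ * Complex.exp (-(starRingEnd ℂ) (sB t))) x)

/-- The recursively defined polynomials `p_n(x,k)`. -/
def pbPoly (k : ℝ) : ℕ → ℝ → ℝ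
  | 0 => fun _ => 1
  | n + 1 => fun x =>
      (1 / Real.sqrt ((n : ℝ) + 1)) * ((x + k) * pbPoly k n x - deriv (pbPoly k n) x)

def pbP (k : ℝ) : ℕ → Polynomial ℝ
  | 0 => 1
  | n + 1 => (Polynomial.X + Polynomial.C k) * pbP k n - (pbP k n).derivative

lemma pbPoly_eq (k : ℝ) : ∀ n : ℕ, pbPoly k n = fun x =>
    (1 / Real.sqrt n.factorial) * (pbP k n).eval x := by
  intro n
  induction n with
  | zero => funext x; simp [pbPoly, pbP]
  | succ n ih =>
    funext x
    have hd : deriv (pbPoly k n) x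
        = (1 / Real.sqrt n.factorial) * (pbP k n).derivative.eval x := by
      rw [ih]
      exact (((pbP k n).hasDerivAt x).const_mul _).deriv
    have hfac : Real.sqrt ((n+1).factorial : ℝ)
        = Real.sqrt ((n:ℝ)+1) * Real.sqrt (n.factorial : ℝ) := by
      rw [← Real.sqrt_mul (by positivity)]
      congr 1
      push_cast [Nat.factorial_succ]
      ring
    have h1 : Real.sqrt ((n:ℝ)+1) ≠ 0 := by positivity
    have h2 : Real.sqrt (n.factorial : ℝ) ≠ 0 := by
      have : (0:ℝ) < (n.factorial : ℝ) := by exact_mod_cast n.factorial_pos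
      positivity
    show (1 / Real.sqrt ((n : ℝ) + 1)) * ((x + k) * pbPoly k n x - deriv (pbPoly k n) x) = _
    rw [hd, ih, hfac]
    simp only [pbP, Polynomial.eval_sub, Polynomial.eval_mul, Polynomial.eval_add,
      Polynomial.eval_X, Polynomial.eval_C]
    field_simp

lemma iterB (k : ℝ) (wA wB sA : ℝ → ℂ) (Nφ : ℂ)
    (hsum : ∀ x : ℝ, wA x + wB x = (x : ℂ) + (k : ℂ))
    (hsA : ∀ x : ℝ, HasDerivAt sA (wA x) x) :
    ∀ n : ℕ, (opB wB)^[n] (fun t => Nφ * Complex.exp (-sA t))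
      = fun x : ℝ => (((pbP k n).eval x : ℝ) : ℂ) * (Nφ * Complex.exp (-sA x)) := by
  intro n
  induction n with
  | zero => funext x; simp [pbP]
  | succ n ih =>
    rw [Function.iterate_succ_apply', ih]
    funext x
    have h1 : HasDerivAt (fun x : ℝ => (((pbP k n).eval x : ℝ) : ℂ))
        ((((pbP k n).derivative.eval x : ℝ)) : ℂ) x :=
      ((pbP k n).hasDerivAt x).ofReal_comp
    have h2 : HasDerivAt (fun x : ℝ => Nφ * Complex.exp (-sA x))
        (Nφ * (Complex.exp (-sA x) * -wA x)) x :=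
      ((hsA x).neg.cexp).const_mul Nφ
    have hD : deriv (fun y : ℝ => (((pbP k n).eval y : ℝ) : ℂ) * (Nφ * Complex.exp (-sA y))) x
        = _ := (h1.mul h2).deriv
    show -deriv _ x + wB x * _ = _
    rw [hD]
    simp only [pbP, Polynomial.eval_sub, Polynomial.eval_mul, Polynomial.eval_add,
      Polynomial.eval_X, Polynomial.eval_C]
    push_cast
    linear_combination (((pbP k n).eval x : ℝ) : ℂ) * (Nφ * Complex.exp (-sA x)) * hsum x

lemma iterA (k : ℝ) (wA wB sB : ℝ → ℂ) (NΨ : ℂ)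
    (hsum : ∀ x : ℝ, wA x + wB x = (x : ℂ) + (k : ℂ))
    (hsB : ∀ x : ℝ, HasDerivAt sB (wB x) x) :
    ∀ n : ℕ, (opAdag wA)^[n] (fun t => NΨ * Complex.exp (-(starRingEnd ℂ) (sB t)))
      = fun x : ℝ => (((pbP k n).eval x : ℝ) : ℂ) * (NΨ * Complex.exp (-(starRingEnd ℂ) (sB x))) := by
  intro n
  induction n with
  | zero => funext x; simp [pbP]
  | succ n ih =>
    rw [Function.iterate_succ_apply', ih]
    funext x
    have h1 : HasDerivAt (fun x : ℝ => (((pbP k n).eval x : ℝ) : ℂ))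
        ((((pbP k n).derivative.eval x : ℝ)) : ℂ) x :=
      ((pbP k n).hasDerivAt x).ofReal_comp
    have hs : HasDerivAt (fun x : ℝ => (starRingEnd ℂ) (sB x)) ((starRingEnd ℂ) (wB x)) x := by
      simpa only [starRingEnd_apply] using (hsB x).star
    have h2 : HasDerivAt (fun x : ℝ => NΨ * Complex.exp (-(starRingEnd ℂ) (sB x)))
        (NΨ * (Complex.exp (-(starRingEnd ℂ) (sB x)) * -(starRingEnd ℂ) (wB x))) x :=
      (hs.neg.cexp).const_mul NΨ
    have hD : deriv (fun y : ℝ => (((pbP k n).eval y : ℝ) : ℂ)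
        * (NΨ * Complex.exp (-(starRingEnd ℂ) (sB y)))) x = _ := (h1.mul h2).deriv
    have hw : (starRingEnd ℂ) (wA x) + (starRingEnd ℂ) (wB x) = (x : ℂ) + (k : ℂ) := by
      have := congrArg (starRingEnd ℂ) (hsum x)
      simpa [map_add, Complex.conj_ofReal] using this
    show -deriv _ x + (starRingEnd ℂ) (wA x) * _ = _
    rw [hD]
    simp only [pbP, Polynomial.eval_sub, Polynomial.eval_mul, Polynomial.eval_add,
      Polynomial.eval_X, Polynomial.eval_C]
    push_cast
    linear_combination (((pbP k n).eval x : ℝ) : ℂ)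
      * (NΨ * Complex.exp (-(starRingEnd ℂ) (sB x))) * hw

theorem stmt2 (k : ℝ) (wA wB sA sB : ℝ → ℂ) (Nφ NΨ : ℂ)
    (hwA : ContDiff ℝ (⊤ : ℕ∞) wA) (hwB : ContDiff ℝ (⊤ : ℕ∞) wB)
    (hsum : ∀ x : ℝ, wA x + wB x = (x : ℂ) + (k : ℂ))
    (hsA : ∀ x : ℝ, HasDerivAt sA (wA x) x)
    (hsB : ∀ x : ℝ, HasDerivAt sB (wB x) x)
    (hnorm : ∀ x : ℝ, sA x + sB x = (x : ℂ) ^ 2 / 2 + (k : ℂ) * (x : ℂ))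
    (hNφ : Nφ ≠ 0) (hNΨ : NΨ ≠ 0) :
    (∀ (n : ℕ) (x : ℝ),
      pbPhi wB sA Nφ n x = (pbPoly k n x : ℂ) * (Nφ * Complex.exp (-sA x))) ∧
    (∀ (n : ℕ) (x : ℝ),
      pbPsi wA sB NΨ n x
        = (pbPoly k n x : ℂ) * (NΨ * Complex.exp (-(starRingEnd ℂ) (sB x)))) := by
  constructor
  · intro n x
    rw [pbPhi, iterB k wA wB sA Nφ hsum hsA n, pbPoly_eq k n]
    push_cast
    ring
  · intro n x
    rw [pbPsi, iterA k wA wB sB NΨ hsum hsB n, pbPoly_eq k n]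
    push_cast
    ring

end
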